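/- Let G be a group and C ⊆ G a normal cone whose induced relation ≥ is a partial order. Let f be a dominant, g ∈ G, and m ≥ 1 an integer. Then f^m is a dominant and the relative growth number is homogeneous under iterations: γ(f, g^m) = m·γ(f,g), γ(f^m, g) = γ(f,g)/m, and consequently γ(f^m, g^m) = γ(f,g). -/

import Mathlib

/-!
For a dominant `f` of a partially ordered normal cone, `f^p ≥ f^q` holds exactly when
`p ≥ q`, so `{p : ℤ | f^p ≥ h}` is a ray `[γ, ∞)`. Hence `γ_k(f, g^m) = γ_{mk}(f, g)`, while
`γ_k(f^m, g)` is the ceiling of `γ_k(f, g) / m`; dividing by `k` and letting `k → ∞` gives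
the three limits.
-/

open Filter

/-- A subset `C` of a group is a *normal cone* if it contains `1`, is closed under
multiplication, and is invariant under conjugation. -/
def IsNormalCone {G : Type*} [Group G] (C : Set G) : Prop :=
  (1 : G) ∈ C ∧ (∀ f g : G, f ∈ C → g ∈ C → f * g ∈ C) ∧
    (∀ f h : G, f ∈ C → h * f * h⁻¹ ∈ C)

/-- The relation `f ≥ g` induced by the cone `C`: `f * g⁻¹ ∈ C`. -/
def ConeGe {G : Type*} [Group G] (C : Set G) (f g : G) : Prop := f * g⁻¹ ∈ C

/-- `f` is a *dominant*: it lies in the cone, is not `1`, and some power of `f`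
dominates any given element. -/
def IsDominant {G : Type*} [Group G] (C : Set G) (f : G) : Prop :=
  f ∈ C ∧ f ≠ 1 ∧ ∀ g : G, ∃ p : ℕ, ConeGe C (f ^ p) g

/-- `γ_k(f,g) = inf { p ∈ ℤ | f^p ≥ g^k }`. -/
noncomputable def gammaK {G : Type*} [Group G] (C : Set G) (f g : G) (k : ℕ) : ℤ :=
  sInf {p : ℤ | ConeGe C (f ^ p) (g ^ k)}

section Cone

variable {G : Type*} [Group G] {C : Set G}

lemma IsNormalCone.pow_mem (hC : IsNormalCone C) {f : G} (hf : f ∈ C) : ∀ n : ℕ, f ^ n ∈ C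
  | 0 => by simpa using hC.1
  | n + 1 => by
      rw [pow_succ]
      exact hC.2.1 _ _ (hC.pow_mem hf n) hf

lemma IsNormalCone.zpow_mem (hC : IsNormalCone C) {f : G} (hf : f ∈ C) {a : ℤ} (ha : 0 ≤ a) :
    f ^ a ∈ C := by
  lift a to ℕ using ha
  simpa using hC.pow_mem hf a

lemma IsNormalCone.coneGe_trans (hC : IsNormalCone C) {a b c : G}
    (hab : ConeGe C a b) (hbc : ConeGe C b c) : ConeGe C a c := by
  have h := hC.2.1 _ _ hab hbc
  rwa [mul_assoc, inv_mul_cancel_left] at h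

lemma coneGe_zpow_zpow_iff {f : G} {a b : ℤ} :
    ConeGe C (f ^ a) (f ^ b) ↔ f ^ (a - b) ∈ C := by
  rw [ConeGe, zpow_sub]

lemma IsNormalCone.coneGe_zpow_of_le (hC : IsNormalCone C) {f : G} (hf : f ∈ C) {a b : ℤ}
    (hab : b ≤ a) : ConeGe C (f ^ a) (f ^ b) :=
  coneGe_zpow_zpow_iff.2 (hC.zpow_mem hf (by omega))

lemma zpow_natCast_zpow (f : G) (m : ℕ) (p : ℤ) : (f ^ m) ^ p = f ^ ((m : ℤ) * p) := by
  rw [zpow_mul, zpow_natCast]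

lemma eq_one_of_mem_of_inv_mem (hanti : ∀ f g : G, ConeGe C f g → ConeGe C g f → f = g)
    {x : G} (hx : x ∈ C) (hx' : x⁻¹ ∈ C) : x = 1 :=
  hanti x 1 (by simpa [ConeGe] using hx) (by simpa [ConeGe] using hx')

end Cone

namespace IsDominant

variable {G : Type*} [Group G] {C : Set G} {f : G}
  (hC : IsNormalCone C) (hanti : ∀ f g : G, ConeGe C f g → ConeGe C g f → f = g)
  (hf : IsDominant C f)
include hC hanti hf

lemma le_of_coneGe_zpow {a b : ℤ} (h : ConeGe C (f ^ a) (f ^ b)) : b ≤ a := by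
  by_contra! hlt
  have hinv : f⁻¹ ∈ C := by
    have hmul := hC.2.1 _ _ (coneGe_zpow_zpow_iff.1 h)
      (hC.zpow_mem hf.1 (by omega : 0 ≤ b - a - 1))
    rwa [← zpow_add, show a - b + (b - a - 1) = -1 by ring, zpow_neg_one] at hmul
  exact hf.2.1 (eq_one_of_mem_of_inv_mem hanti hf.1 hinv)

lemma pow {m : ℕ} (hm : 0 < m) : IsDominant C (f ^ m) := by
  refine ⟨hC.pow_mem hf.1 m, fun h1 => ?_, fun g => ?_⟩
  · have h : ConeGe C (f ^ (0 : ℤ)) (f ^ (m : ℤ)) := by simp [ConeGe, h1, hC.1]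
    have := hf.le_of_coneGe_zpow hC hanti h
    omega
  · obtain ⟨p, hp⟩ := hf.2.2 g
    refine ⟨p, hC.coneGe_trans ?_ hp⟩
    rw [← pow_mul, ← zpow_natCast, ← zpow_natCast f p]
    exact hC.coneGe_zpow_of_le hf.1 (by exact_mod_cast Nat.le_mul_of_pos_left p hm)

lemma bddBelow_coneGe (h : G) : BddBelow {p : ℤ | ConeGe C (f ^ p) h} := by
  obtain ⟨q, hq⟩ := hf.2.2 h⁻¹
  have hhq : ConeGe C h (f ^ (-(q : ℤ))) := by
    have := hC.2.2 _ (f ^ q)⁻¹ hq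
    simpa [ConeGe, mul_assoc] using this
  exact ⟨-q, fun p hp => hf.le_of_coneGe_zpow hC hanti (hC.coneGe_trans hp hhq)⟩

lemma coneGe_zpow_iff_gammaK_le (g : G) (k : ℕ) (p : ℤ) :
    ConeGe C (f ^ p) (g ^ k) ↔ gammaK C f g k ≤ p := by
  refine ⟨fun hp => csInf_le (hf.bddBelow_coneGe hC hanti _) hp, fun hp => ?_⟩
  obtain ⟨p₀, hp₀⟩ := hf.2.2 (g ^ k)
  have hne : {p : ℤ | ConeGe C (f ^ p) (g ^ k)}.Nonempty := ⟨p₀, by simpa using hp₀⟩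
  exact hC.coneGe_trans (hC.coneGe_zpow_of_le hf.1 hp)
    (Int.csInf_mem hne (hf.bddBelow_coneGe hC hanti _))

lemma gammaK_le_mul_gammaK_pow {m : ℕ} (hm : 0 < m) (g : G) (k : ℕ) :
    gammaK C f g k ≤ m * gammaK C (f ^ m) g k := by
  have h := ((hf.pow hC hanti hm).coneGe_zpow_iff_gammaK_le hC hanti g k _).2 le_rfl
  rwa [zpow_natCast_zpow, hf.coneGe_zpow_iff_gammaK_le hC hanti] at h

lemma mul_gammaK_pow_lt {m : ℕ} (hm : 0 < m) (g : G) (k : ℕ) :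
    m * gammaK C (f ^ m) g k < gammaK C f g k + m := by
  have h := ((hf.pow hC hanti hm).coneGe_zpow_iff_gammaK_le hC hanti g k
    (gammaK C (f ^ m) g k - 1)).not.2 (by omega)
  rw [zpow_natCast_zpow, hf.coneGe_zpow_iff_gammaK_le hC hanti] at h
  linarith

end IsDominant

lemma gammaK_pow_right {G : Type*} [Group G] (C : Set G) (f g : G) (m k : ℕ) :
    gammaK C f (g ^ m) k = gammaK C f g (m * k) := by
  rw [gammaK, gammaK, ← pow_mul]

lemma tendsto_comp_mul_div {c : ℕ → ℝ} {A : ℝ} {m : ℕ} (hm : 0 < m)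
    (hc : Tendsto (fun k : ℕ => c k / k) atTop (nhds A)) :
    Tendsto (fun k : ℕ => c (m * k) / k) atTop (nhds (m * A)) := by
  have hcm := (hc.comp (tendsto_id.const_mul_atTop' hm)).const_mul (m : ℝ)
  refine hcm.congr' ?_
  filter_upwards [eventually_ge_atTop 1] with k hk
  have : (m : ℝ) ≠ 0 := by positivity
  simp only [Function.comp_apply, id, Nat.cast_mul]
  field_simp

lemma tendsto_div_of_le_mul_le_add {c d : ℕ → ℝ} {A m B : ℝ} (hm : 0 < m)
    (hlow : ∀ k, c k ≤ m * d k) (hupp : ∀ k, m * d k ≤ c k + B)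
    (hc : Tendsto (fun k : ℕ => c k / k) atTop (nhds A)) :
    Tendsto (fun k : ℕ => d k / k) atTop (nhds (A / m)) := by
  have hlim : Tendsto (fun k : ℕ => c k / k / m + B / m / k) atTop (nhds (A / m)) := by
    simpa using (hc.div_const m).add (tendsto_const_div_atTop_nhds_zero_nat (B / m))
  refine tendsto_of_tendsto_of_tendsto_of_le_of_le' (hc.div_const m) hlim ?_ ?_
  all_goals
    filter_upwards [eventually_gt_atTop 0] with k hk
    have hk : (0 : ℝ) < k := by exact_mod_cast hk
    rw [← sub_nonneg]
  · have : d k / k - c k / k / m = (m * d k - c k) / (m * k) := by field_simp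
    rw [this]
    exact div_nonneg (by linarith [hlow k]) (by positivity)
  · have : c k / k / m + B / m / k - d k / k = (c k + B - m * d k) / (m * k) := by field_simp
    rw [this]
    exact div_nonneg (by linarith [hupp k]) (by positivity)

section Growth

variable {G : Type*} [Group G] {C : Set G} {A : ℝ}

lemma tendsto_gammaK_pow_right (f g : G) {m : ℕ} (hm : 0 < m)
    (hA : Tendsto (fun k : ℕ => (gammaK C f g k : ℝ) / k) atTop (nhds A)) :
    Tendsto (fun k : ℕ => (gammaK C f (g ^ m) k : ℝ) / k) atTop (nhds (m * A)) := by
  simpa only [gammaK_pow_right] using tendsto_comp_mul_div hm hA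

lemma IsDominant.tendsto_gammaK_pow_left (hC : IsNormalCone C)
    (hanti : ∀ f g : G, ConeGe C f g → ConeGe C g f → f = g)
    {f : G} (hf : IsDominant C f) (g : G) {m : ℕ} (hm : 0 < m)
    (hA : Tendsto (fun k : ℕ => (gammaK C f g k : ℝ) / k) atTop (nhds A)) :
    Tendsto (fun k : ℕ => (gammaK C (f ^ m) g k : ℝ) / k) atTop (nhds (A / m)) :=
  tendsto_div_of_le_mul_le_add (B := m) (by exact_mod_cast hm)
    (fun k => by exact_mod_cast hf.gammaK_le_mul_gammaK_pow hC hanti hm g k)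
    (fun k => by exact_mod_cast (hf.mul_gammaK_pow_lt hC hanti hm g k).le) hA

end Growth

/-- Behaviour of the relative growth under iterations: for a dominant `f` and
`m ≥ 1`, `f^m` is a dominant, `γ(f, g^m) = m γ(f,g)`, `γ(f^m, g) = γ(f,g)/m`,
and `γ(f^m, g^m) = γ(f,g)`. -/
theorem statement12 {G : Type*} [Group G] (C : Set G) (hC : IsNormalCone C)
    (hanti : ∀ f g : G, ConeGe C f g → ConeGe C g f → f = g)
    (f g : G) (hf : IsDominant C f) (m : ℕ) (hm : 1 ≤ m)
    (A : ℝ)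
    (hA : Tendsto (fun k : ℕ => (gammaK C f g k : ℝ) / (k : ℝ)) atTop (nhds A)) :
    IsDominant C (f ^ m) ∧
    Tendsto (fun k : ℕ => (gammaK C f (g ^ m) k : ℝ) / (k : ℝ)) atTop (nhds ((m : ℝ) * A)) ∧
    Tendsto (fun k : ℕ => (gammaK C (f ^ m) g k : ℝ) / (k : ℝ)) atTop (nhds (A / (m : ℝ))) ∧
    Tendsto (fun k : ℕ => (gammaK C (f ^ m) (g ^ m) k : ℝ) / (k : ℝ)) atTop (nhds A) := by
  have hAm := tendsto_gammaK_pow_right f g hm hA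
  have hm' : (m : ℝ) ≠ 0 := by positivity
  refine ⟨hf.pow hC hanti hm, hAm, hf.tendsto_gammaK_pow_left hC hanti g hm hA, ?_⟩
  simpa [hm'] using hf.tendsto_gammaK_pow_left hC hanti (g ^ m) hm hAm
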